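/- Let Φ be the MPP instance reduced from a 3SAT instance (X, C) with n variables and m clauses (as described in the context). If Φ admits a solution with total arrival time at most (n+m)(m+2), then (X, C) is satisfiable; moreover, a satisfying assignment is obtained by setting x_i to false if the variable robot r_{x_i} traverses the i-th upper path and to true if it traverses the i-th lower path. -/

import Mathlib

/-!
Formalization of multi-robot path planning on graphs (MPP).

An MPP instance consists of a connected simple graph `G` on a vertex type `V`,
a finite set of robots (an index type `R`), and injective start/goal
configurations `xI xG : R → V`.  A scheduled path is a map `ℕ → V`.
-/

namespace MPPFormal

variable {V R : Type}

/-- The arrival time of a path `p` with goal `g`: the smallest time `t`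
with `p t = g`. -/
noncomputable def arrivalTime (g : V) (p : ℕ → V) : ℕ := sInf {t | p t = g}

/-- A feasible scheduled path from `s` to `g` in the graph `G`:
it starts at `s`, reaches `g` at some time, stays at `g` forever after the
first time it reaches `g`, and at every time step it either traverses an
edge of `G` or stays put. -/
def FeasiblePath (G : SimpleGraph V) (s g : V) (p : ℕ → V) : Prop :=
  p 0 = s ∧ (∃ t, p t = g) ∧ (∀ t, arrivalTime g p ≤ t → p t = g) ∧
    ∀ t, G.Adj (p t) (p (t + 1)) ∨ p t = p (t + 1)

/-- Two scheduled paths collide if they meet at the same vertex at the same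
time, or if they swap along an edge head-on. -/
def Collide (p q : ℕ → V) : Prop :=
  (∃ t, p t = q t) ∨ ∃ t, p t = q (t + 1) ∧ p (t + 1) = q t ∧ p t ≠ p (t + 1)

/-- The length of a scheduled path: the number of time steps at which it
actually moves. -/
noncomputable def pathLen (p : ℕ → V) : ℕ := Set.ncard {t | p t ≠ p (t + 1)}

/-- A solution to the MPP instance `(G, R, xI, xG)`: a family of pairwise
non-colliding feasible paths, one per robot. -/
def IsSolution (G : SimpleGraph V) (xI xG : R → V) (p : R → ℕ → V) : Prop :=
  (∀ i, FeasiblePath G (xI i) (xG i) (p i)) ∧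
    Pairwise fun i j => ¬ Collide (p i) (p j)

/-- `(G, xI, xG)` together with the robot index type `R` forms an MPP
instance: the graph is connected and the start and goal configurations are
injective. -/
def IsMPPInstance (G : SimpleGraph V) (xI xG : R → V) : Prop :=
  G.Connected ∧ Function.Injective xI ∧ Function.Injective xG

variable [Fintype R]

/-- Total arrival time of a solution. -/
noncomputable def totalTime (xG : R → V) (p : R → ℕ → V) : ℕ :=
  ∑ i, arrivalTime (xG i) (p i)

/-- Makespan (last arrival time) of a solution. -/
noncomputable def makespan (xG : R → V) (p : R → ℕ → V) : ℕ :=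
  Finset.univ.sup fun i => arrivalTime (xG i) (p i)

/-- Total distance traveled in a solution. -/
noncomputable def totalDist (p : R → ℕ → V) : ℕ := ∑ i, pathLen (p i)

/-- Maximum single-robot distance of a solution. -/
noncomputable def maxDist (p : R → ℕ → V) : ℕ :=
  Finset.univ.sup fun i => pathLen (p i)

/-- Minimum total arrival time over all solutions. -/
noncomputable def minTotalTime (G : SimpleGraph V) (xI xG : R → V) : ℕ :=
  sInf {c | ∃ p, IsSolution G xI xG p ∧ totalTime xG p = c}

/-- Minimum makespan over all solutions. -/
noncomputable def minMakespan (G : SimpleGraph V) (xI xG : R → V) : ℕ :=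
  sInf {c | ∃ p, IsSolution G xI xG p ∧ makespan xG p = c}

/-- Minimum total distance over all solutions. -/
noncomputable def minTotalDist (G : SimpleGraph V) (xI xG : R → V) : ℕ :=
  sInf {c | ∃ p, IsSolution G xI xG p ∧ totalDist p = c}

/-- Minimum maximum distance over all solutions. -/
noncomputable def minMaxDist (G : SimpleGraph V) (xI xG : R → V) : ℕ :=
  sInf {c | ∃ p, IsSolution G xI xG p ∧ maxDist p = c}

end MPPFormal

/-!
The reduction from 3SAT to MPP.

A 3SAT instance over `n` variables with `m` clauses assigns to each clause
`j : Fin m` three literals; a literal is a pair `(i, b) : Fin n × Bool`,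
`b = true` meaning the non-negated variable `x_i` and `b = false` the
negated literal `¬ x_i`.  The three literals of each clause involve three
distinct variables.
-/

namespace MPPFormal

/-- A 3SAT instance with variables `x_1, …, x_n` and clauses `c_1, …, c_m`. -/
structure ThreeSat (n m : ℕ) where
  lit : Fin m → Fin 3 → Fin n × Bool
  distinctVars : ∀ j (k k' : Fin 3), k ≠ k' → (lit j k).1 ≠ (lit j k').1

/-- An assignment `a` satisfies the instance if every clause contains a true
literal. -/
def ThreeSat.SatisfiedBy {n m : ℕ} (sat : ThreeSat n m) (a : Fin n → Bool) : Prop :=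
  ∀ j, ∃ k, a (sat.lit j k).1 = (sat.lit j k).2

/-- Satisfiability of a 3SAT instance. -/
def ThreeSat.Satisfiable {n m : ℕ} (sat : ThreeSat n m) : Prop :=
  ∃ a, sat.SatisfiedBy a

/-- Vertices of the MPP instance `Φ` reduced from a 3SAT instance with `n`
variables and `m` clauses:
* `vx i` is the left endpoint `v_{x_i}` of the `i`-th variable strip (start of
  the variable robot `r_{x_i}`);
* `vxg i` is the right endpoint `v_{x_i}^g` (goal of `r_{x_i}`);
* `mid i side k` is the interior vertex of the `i`-th upper (`side = true`)
  or lower (`side = false`) path lying at distance `k + 1` from `vx i`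
  (each of the two paths has length `m + 2`, hence `m + 1` interior
  vertices, `k : Fin (m+1)`);
* `vc j` is the start vertex `v_{c_j}` of the clause robot `r_{c_j}`;
* `vcg j` is its goal vertex `v_{c_j}^g`. -/
inductive PhiV (n m : ℕ) where
  | vx (i : Fin n)
  | vxg (i : Fin n)
  | mid (i : Fin n) (side : Bool) (k : Fin (m + 1))
  | vc (j : Fin m)
  | vcg (j : Fin m)
deriving DecidableEq

/-- Base relation generating the edges of `Φ`:
the two length-`(m+2)` paths of each variable strip; an edge from `v_{c_j}`
to the vertex at distance `j + 1` (`1`-indexed: distance `j`) from `v_{x_i}`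
on the upper (resp. lower) path of `x_i` for each non-negated (resp. negated)
literal of `c_j`; the path `v_{c_1}^g - ⋯ - v_{c_m}^g`; and edges from
`v_{c_m}^g` to every `v_{x_i}`. -/
def phiRel {n m : ℕ} (sat : ThreeSat n m) : PhiV n m → PhiV n m → Prop
  | PhiV.vx i, PhiV.mid i' _ k => i = i' ∧ (k : ℕ) = 0
  | PhiV.mid i s k, PhiV.mid i' s' k' => i = i' ∧ s = s' ∧ (k' : ℕ) = (k : ℕ) + 1
  | PhiV.mid i _ k, PhiV.vxg i' => i = i' ∧ (k : ℕ) = m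
  | PhiV.vc j, PhiV.mid i s k => (∃ l, sat.lit j l = (i, s)) ∧ (k : ℕ) = (j : ℕ)
  | PhiV.vcg j, PhiV.vcg j' => (j' : ℕ) = (j : ℕ) + 1
  | PhiV.vcg j, PhiV.vx _ => (j : ℕ) + 1 = m
  | _, _ => False

/-- The graph of the reduced MPP instance `Φ`. -/
def phiGraph {n m : ℕ} (sat : ThreeSat n m) : SimpleGraph (PhiV n m) :=
  SimpleGraph.fromRel (phiRel sat)

/-- Start configuration of `Φ`: the variable robot `r_{x_i}` (index
`Sum.inl i`) starts at `v_{x_i}`; the clause robot `r_{c_j}` (index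
`Sum.inr j`) starts at `v_{c_j}`. -/
def phiStart {n m : ℕ} : Fin n ⊕ Fin m → PhiV n m :=
  Sum.elim PhiV.vx PhiV.vc

/-- Goal configuration of `Φ`: `r_{x_i}` must reach `v_{x_i}^g` and `r_{c_j}`
must reach `v_{c_j}^g`. -/
def phiGoal {n m : ℕ} : Fin n ⊕ Fin m → PhiV n m :=
  Sum.elim PhiV.vxg PhiV.vcg

end MPPFormal


/-!
Every robot of `Φ` needs at least `m + 2` steps: for each robot there is an integer potential
on the vertices, changing by at most one along every edge, that rises by `m + 2` from its start
to its goal. The budget `(n + m)(m + 2)` therefore forces every robot to raise its potential at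
every step. This pins the variable robot `r_{x_i}` to one of the two paths of its strip, and
makes the clause robot `r_{c_j}` step onto the path of one of its literals and walk it back to
`v_{x_i}`. Were that the path taken by `r_{x_i}`, the two robots would collide; so each clause
has a literal on the path that `r_{x_i}` avoids, which is a true literal.
-/

namespace MPPFormal

section Potential

variable {V : Type} {G : SimpleGraph V}

def IsPotential (G : SimpleGraph V) (F : V → ℤ) : Prop :=
  ∀ u v, G.Adj u v → F v ≤ F u + 1

def MovesAlong (G : SimpleGraph V) (q : ℕ → V) : Prop :=
  ∀ t, G.Adj (q t) (q (t + 1)) ∨ q t = q (t + 1)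

def IsForwardClosed (G : SimpleGraph V) (F : V → ℤ) (L : ℤ) (S : Set V) : Prop :=
  ∀ u ∈ S, ∀ v, G.Adj u v → F v = F u + 1 → F v ≤ L → v ∈ S

lemma isPotential_fromRel {r : V → V → Prop} {F : V → ℤ}
    (h : ∀ u v, r u v → F v ≤ F u + 1 ∧ F u ≤ F v + 1) :
    IsPotential (SimpleGraph.fromRel r) F := by
  rintro u v ⟨-, huv | hvu⟩
  exacts [(h u v huv).1, (h v u hvu).2]

variable {F : V → ℤ} {q : ℕ → V}

lemma IsPotential.apply_sub_apply_le (hF : IsPotential G F) (hq : MovesAlong G q) {a b : ℕ}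
    (hab : a ≤ b) : F (q b) - F (q a) ≤ b - a := by
  induction b, hab using Nat.le_induction with
  | base => simp
  | succ b _ ih =>
    have hstep : F (q (b + 1)) ≤ F (q b) + 1 := by
      rcases hq b with h | h
      · exact hF _ _ h
      · rw [h]; omega
    push_cast
    omega

lemma MovesAlong.adj_of_apply_succ (hq : MovesAlong G q) {t : ℕ}
    (h : F (q (t + 1)) = F (q t) + 1) : G.Adj (q t) (q (t + 1)) :=
  (hq t).resolve_right fun he => by rw [he] at h; omega

lemma IsForwardClosed.mem {S : Set V} {c L : ℤ} {T : ℕ} (hS : IsForwardClosed G F L S)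
    (hq : MovesAlong G q) (hpot : ∀ t ≤ T, F (q t) = c + t) (h₁ : q 1 ∈ S) {t : ℕ}
    (ht : 1 ≤ t) (htT : t ≤ T) (htL : c + t ≤ L) : q t ∈ S := by
  induction t, ht using Nat.le_induction with
  | base => exact h₁
  | succ t ht ih =>
    have hrise : F (q (t + 1)) = F (q t) + 1 := by
      rw [hpot t (by omega), hpot (t + 1) htT]; push_cast; ring
    exact hS _ (ih (by omega) (by push_cast at htL ⊢; omega)) _ (hq.adj_of_apply_succ hrise)
      hrise (by rw [hpot (t + 1) htT]; exact htL)

namespace FeasiblePath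

variable {s g : V} (hp : FeasiblePath G s g q)
include hp

lemma apply_zero : q 0 = s := hp.1

lemma movesAlong : MovesAlong G q := hp.2.2.2

lemma apply_of_arrivalTime_le {t : ℕ} (ht : arrivalTime g q ≤ t) : q t = g := hp.2.2.1 t ht

lemma apply_arrivalTime : q (arrivalTime g q) = g := Nat.sInf_mem hp.2.1

lemma sub_le_arrivalTime (hF : IsPotential G F) : F g - F s ≤ arrivalTime g q := by
  have h := hF.apply_sub_apply_le hp.movesAlong (Nat.zero_le (arrivalTime g q))
  rwa [hp.apply_arrivalTime, hp.apply_zero, Nat.cast_zero, sub_zero] at h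

lemma potential_eq (hF : IsPotential G F) (hT : F g - F s = arrivalTime g q) {t : ℕ}
    (ht : t ≤ arrivalTime g q) : F (q t) = F s + t := by
  have h₁ := hF.apply_sub_apply_le hp.movesAlong (Nat.zero_le t)
  have h₂ := hF.apply_sub_apply_le hp.movesAlong ht
  rw [hp.apply_zero] at h₁
  rw [hp.apply_arrivalTime] at h₂
  push_cast at h₁
  omega

end FeasiblePath

end Potential

lemma arrivalTime_eq_of_totalTime_le {V R : Type} [Fintype R] {xG : R → V} {p : R → ℕ → V}
    {d : R → ℕ} (hd : ∀ r, d r ≤ arrivalTime (xG r) (p r)) (hT : totalTime xG p ≤ ∑ r, d r)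
    (r : R) : arrivalTime (xG r) (p r) = d r :=
  ((Finset.sum_eq_sum_iff_of_le fun r _ => hd r).1
    (le_antisymm (Finset.sum_le_sum fun r _ => hd r) hT) r (Finset.mem_univ r)).symm

variable {n m : ℕ}

/-- `v_{c_j}` sits at the level of its neighbours on the strips and the clause goals at level
`0`, so that a walk gaining one level per step cannot leave a strip. -/
def varPot : PhiV n m → ℤ
  | PhiV.vx _ => 0
  | PhiV.vxg _ => m + 2
  | PhiV.mid _ _ k => (k : ℕ) + 1
  | PhiV.vc j => (j : ℕ) + 1
  | PhiV.vcg _ => 0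

/-- Distance from `v_{c_j}` along its route to `v_{c_j}^g`: onto the path of a literal, back
along it to `v_{x_i}`, then through `v_{c_m}^g, …, v_{c_j}^g`. -/
def clausePot (j : Fin m) : PhiV n m → ℤ
  | PhiV.vx _ => (j : ℕ) + 2
  | PhiV.vxg _ => (j : ℕ) - m
  | PhiV.mid _ _ k => (j : ℕ) + 1 - (k : ℕ)
  | PhiV.vc j' => (j : ℕ) - (j' : ℕ)
  | PhiV.vcg j' => m + 2 + (j : ℕ) - (j' : ℕ)

def robotPot : Fin n ⊕ Fin m → PhiV n m → ℤ :=
  Sum.elim (fun _ => varPot) clausePot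

lemma isPotential_robotPot (sat : ThreeSat n m) (r : Fin n ⊕ Fin m) :
    IsPotential (phiGraph sat) (robotPot r) := by
  refine isPotential_fromRel fun u v h => ?_
  cases r <;> cases u <;> cases v <;>
    simp only [phiRel] at h <;> simp only [robotPot, Sum.elim_inl, Sum.elim_inr, varPot,
      clausePot] <;> omega

lemma robotPot_start (r : Fin n ⊕ Fin m) : robotPot r (phiStart r) = 0 := by
  cases r <;> simp [robotPot, phiStart, varPot, clausePot]

lemma robotPot_goal (r : Fin n ⊕ Fin m) : robotPot r (phiGoal r) = m + 2 := by
  cases r <;> simp [robotPot, phiGoal, varPot, clausePot]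

section Strip

variable {sat : ThreeSat n m} {i : Fin n} {s : Bool}

lemma mem_range_mid_of_adj_vx {v : PhiV n m} (h : (phiGraph sat).Adj (PhiV.vx i) v)
    (hv : varPot v = 1) : ∃ s, v ∈ Set.range (PhiV.mid i s) := by
  cases v <;> simp_all [phiGraph, phiRel, varPot]

lemma mem_range_mid_of_adj_vc {j : Fin m} {v : PhiV n m} (h : (phiGraph sat).Adj (PhiV.vc j) v) :
    ∃ i s, (∃ l, sat.lit j l = (i, s)) ∧ v ∈ Set.range (PhiV.mid i s) := by
  cases v <;> simp_all [phiGraph, phiRel]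

lemma isForwardClosed_varPot_range_mid :
    IsForwardClosed (phiGraph sat) varPot (m + 1) (Set.range (PhiV.mid i s)) := by
  rintro _ ⟨k, rfl⟩ v h hv hvm
  cases v <;> simp_all [phiGraph, phiRel, varPot]
  grind

lemma isForwardClosed_clausePot_range_mid (j : Fin m) :
    IsForwardClosed (phiGraph sat) (clausePot j) ((j : ℕ) + 1) (Set.range (PhiV.mid i s)) := by
  rintro _ ⟨k, rfl⟩ v h hv hvm
  cases v <;> simp_all [phiGraph, phiRel, clausePot] <;> grind

lemma eq_of_varPot_eq {u v : PhiV n m} (hu : u ∈ Set.range (PhiV.mid i s))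
    (hv : v ∈ Set.range (PhiV.mid i s)) (h : varPot u = varPot v) : u = v := by
  obtain ⟨k, rfl⟩ := hu
  obtain ⟨k', rfl⟩ := hv
  simp only [varPot] at h
  obtain rfl : k = k' := Fin.ext (by omega)
  rfl

lemma clausePot_eq_of_mem_range_mid (j : Fin m) {u : PhiV n m}
    (hu : u ∈ Set.range (PhiV.mid i s)) : clausePot j u = (j : ℕ) + 2 - varPot u := by
  obtain ⟨k, rfl⟩ := hu
  simp only [clausePot, varPot]
  ring

end Strip

section Trajectory

variable {sat : ThreeSat n m} {q : ℕ → PhiV n m}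

lemma exists_side_of_varPot {i : Fin n} (hq : MovesAlong (phiGraph sat) q)
    (h₀ : q 0 = PhiV.vx i) (hpot : ∀ t ≤ m + 2, varPot (q t) = t) :
    ∃ s, ∀ t, 1 ≤ t → t ≤ m + 1 → q t ∈ Set.range (PhiV.mid i s) := by
  have h₁ : varPot (q 1) = 1 := by simpa using hpot 1 (by omega)
  have hadj := hq.adj_of_apply_succ (F := varPot) (t := 0)
    (by rw [h₁, hpot 0 (by omega)]; rfl)
  rw [h₀] at hadj
  obtain ⟨s, hs⟩ := mem_range_mid_of_adj_vx hadj h₁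
  exact ⟨s, fun t ht htm => isForwardClosed_varPot_range_mid.mem hq (c := 0)
    (by simpa using hpot) hs ht (by omega) (by omega)⟩

lemma exists_literal_of_clausePot {j : Fin m} (hq : MovesAlong (phiGraph sat) q)
    (h₀ : q 0 = PhiV.vc j) (hpot : ∀ t ≤ m + 2, clausePot j (q t) = t) :
    ∃ i s, (∃ l, sat.lit j l = (i, s)) ∧
      ∀ t, 1 ≤ t → t ≤ (j : ℕ) + 1 → q t ∈ Set.range (PhiV.mid i s) := by
  have hadj := hq.adj_of_apply_succ (F := clausePot j) (t := 0)
    (by rw [hpot 0 (by omega), hpot 1 (by omega)]; rfl)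
  rw [h₀] at hadj
  obtain ⟨i, s, hlit, hs⟩ := mem_range_mid_of_adj_vc hadj
  exact ⟨i, s, hlit, fun t ht htj => (isForwardClosed_clausePot_range_mid j).mem hq (c := 0)
    (by simpa using hpot) hs ht (by omega) (by omega)⟩

/-- The two robots meet at a vertex if `j` is even and swap along an edge if `j` is odd. -/
lemma collide_of_same_strip {i : Fin n} {s : Bool} {j : Fin m} {q' : ℕ → PhiV n m}
    (hq : ∀ t, 1 ≤ t → t ≤ m + 1 → q t ∈ Set.range (PhiV.mid i s))
    (hpot : ∀ t ≤ m + 2, varPot (q t) = t)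
    (hq' : ∀ t, 1 ≤ t → t ≤ (j : ℕ) + 1 → q' t ∈ Set.range (PhiV.mid i s))
    (hpot' : ∀ t ≤ m + 2, clausePot j (q' t) = t) : Collide q q' := by
  have hj := j.isLt
  have meet : ∀ t t', 1 ≤ t → 1 ≤ t' → t' ≤ (j : ℕ) + 1 → t + t' = (j : ℕ) + 2 →
      q t = q' t' := fun t t' ht ht' ht'j hsum =>
    eq_of_varPot_eq (hq t ht (by omega)) (hq' t' ht' ht'j) (by
      have := hpot' t' (by omega)
      rw [clausePot_eq_of_mem_range_mid j (hq' t' ht' ht'j)] at this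
      rw [hpot t (by omega)]
      omega)
  obtain ⟨u, hu | hu⟩ := Nat.even_or_odd' (j : ℕ)
  · exact Or.inl ⟨u + 1, meet _ _ (by omega) (by omega) (by omega) (by omega)⟩
  · refine Or.inr ⟨u + 1, meet _ _ (by omega) (by omega) (by omega) (by omega),
      meet _ _ (by omega) (by omega) (by omega) (by omega), fun h => ?_⟩
    have := congrArg varPot h
    rw [hpot _ (by omega), hpot _ (by omega)] at this
    omega

lemma exists_apply_eq_mid_iff {i : Fin n} {s s' : Bool}
    (hq : ∀ t, 1 ≤ t → t ≤ m + 1 → q t ∈ Set.range (PhiV.mid i s))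
    (hpot : ∀ t ≤ m + 2, varPot (q t) = t) (hgoal : ∀ t, m + 2 ≤ t → q t = PhiV.vxg i) :
    (∃ (t : ℕ) (k : Fin (m + 1)), q t = PhiV.mid i s' k) ↔ s' = s := by
  constructor
  · rintro ⟨t, k, hk⟩
    have ht : t ≤ m + 1 := by
      by_contra! ht
      rw [hgoal t ht] at hk
      cases hk
    have hkt := hpot t (by omega)
    rw [hk] at hkt
    obtain ⟨k', hk'⟩ := hq t (by simp only [varPot] at hkt; omega) ht
    rw [hk] at hk'
    exact (PhiV.mid.inj hk').2.1.symm
  · rintro rfl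
    obtain ⟨k, hk⟩ := hq 1 le_rfl (by omega)
    exact ⟨1, k, hk.symm⟩

end Trajectory

theorem cheap_solution_gives_assignment_general {n m : ℕ}
    (sat : ThreeSat n m) (p : Fin n ⊕ Fin m → ℕ → PhiV n m)
    (hp : IsSolution (phiGraph sat) phiStart phiGoal p)
    (hT : totalTime phiGoal p ≤ (n + m) * (m + 2)) :
    sat.Satisfiable ∧
    ∀ a : Fin n → Bool,
      (∀ i, a i = false ↔ ∃ (t : ℕ) (k : Fin (m + 1)),
        p (Sum.inl i) t = PhiV.mid i true k) →
      sat.SatisfiedBy a := by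
  obtain ⟨hfeas, hcol⟩ := hp
  have harr : ∀ r, arrivalTime (phiGoal r) (p r) = m + 2 := by
    refine arrivalTime_eq_of_totalTime_le (fun r => ?_) (by simpa [mul_comm] using hT)
    have := (hfeas r).sub_le_arrivalTime (isPotential_robotPot sat r)
    rw [robotPot_goal, robotPot_start] at this
    omega
  have hpot : ∀ r, ∀ t ≤ m + 2, robotPot r (p r t) = t := fun r t ht => by
    have := (hfeas r).potential_eq (isPotential_robotPot sat r)
      (by rw [robotPot_goal, robotPot_start, harr]; push_cast; ring) (harr r ▸ ht)
    rwa [robotPot_start, zero_add] at this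
  choose side hside using fun i =>
    exists_side_of_varPot (hfeas (.inl i)).movesAlong (hfeas (.inl i)).apply_zero (hpot (.inl i))
  have hsat : sat.SatisfiedBy fun i => !side i := fun j => by
    obtain ⟨i, s, ⟨l, hl⟩, hs⟩ := exists_literal_of_clausePot (hfeas (.inr j)).movesAlong
      (hfeas (.inr j)).apply_zero (hpot (.inr j))
    refine ⟨l, ?_⟩
    rw [hl]
    by_contra hne
    obtain rfl : s = side i := by cases s <;> simp_all
    exact hcol Sum.inl_ne_inr (collide_of_same_strip (hside i) (hpot (.inl i)) hs (hpot (.inr j)))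
  refine ⟨⟨_, hsat⟩, fun a ha => ?_⟩
  convert hsat with i
  have hgoal t (ht : m + 2 ≤ t) := (hfeas (.inl i)).apply_of_arrivalTime_le (t := t) (harr _ ▸ ht)
  have := (ha i).trans (exists_apply_eq_mid_iff (hside i) (hpot (.inl i)) hgoal)
  revert this
  cases a i <;> cases side i <;> simp

/-- If the reduced MPP instance `Φ` admits a solution with total arrival time
at most `(n + m)(m + 2)`, then the 3SAT instance is satisfiable; moreover, a
satisfying assignment is obtained by setting `x_i` to `false` if the variable
robot `r_{x_i}` traverses the `i`-th upper path (i.e. its path visits an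
interior vertex of the upper path) and to `true` if it traverses the `i`-th
lower path. -/
theorem cheap_solution_gives_assignment {n m : ℕ} (hm : 0 < m)
    (sat : ThreeSat n m) (p : Fin n ⊕ Fin m → ℕ → PhiV n m)
    (hp : IsSolution (phiGraph sat) phiStart phiGoal p)
    (hT : totalTime phiGoal p ≤ (n + m) * (m + 2)) :
    sat.Satisfiable ∧
    ∀ a : Fin n → Bool,
      (∀ i, a i = false ↔ ∃ (t : ℕ) (k : Fin (m + 1)),
        p (Sum.inl i) t = PhiV.mid i true k) →
      sat.SatisfiedBy a :=
  cheap_solution_gives_assignment_general sat p hp hT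

end MPPFormal
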